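/- arXiv:2602.06368 — 2 statements merged into one kernel-verified Lean document; each statement's English description precedes it below -/
import Mathlib

section
/- Let $x\in(0,1]$ and let $(g_n(x))$ and $(q_n(x))$ be its greedy and quasi-greedy $\beta$-expansion digit sequences. For any $\lambda$ with $|\lambda|>r_t$ such that $\phi_t(\lambda^{-1})=1$, one has the identity $\sum_{n=1}^\infty \frac{g_n(x)\,e^{t\sum_{i=1}^{n-1}g_i(x)}}{\lambda^n} = \sum_{n=1}^\infty \frac{q_n(x)\,e^{t\sum_{i=1}^{n-1}q_i(x)}}{\lambda^n}$. -/
open scoped BigOperators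
open Filter

/-- The beta-map `τ_β(x) = βx - ⌊βx⌋`. -/
noncomputable def tauβ (β x : ℝ) : ℝ := β * x - ⌊β * x⌋

/-- The greedy digits: `gdigit β x n = ⌊β τ_β^n(x)⌋` (0-indexed; `gdigit β x (n-1) = g_n(x)`). -/
noncomputable def gdigit (β x : ℝ) (n : ℕ) : ℤ := ⌊β * (tauβ β)^[n] x⌋

/-- `x` is simple if some iterate of the beta-map hits `1/β`. -/
def isSimple (β x : ℝ) : Prop := ∃ n : ℕ, (tauβ β)^[n] x = 1 / β

open Classical in
/-- The quasi-greedy expansion of `1` (0-indexed): if `1` is simple with minimal `m` such that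
`τ_β^[m] 1 = 1/β` (so `S(1) = m+1`), it is the periodic repetition of the word
`g_1(1) … g_{S-1}(1) (g_S(1) - 1)`; otherwise it is the greedy expansion of `1`. -/
noncomputable def qone (β : ℝ) : ℕ → ℤ :=
  if h : ∃ m : ℕ, (tauβ β)^[m] (1 : ℝ) = 1 / β then
    fun n =>
      if n % (Nat.find h + 1) = Nat.find h then gdigit β 1 (Nat.find h) - 1
      else gdigit β 1 (n % (Nat.find h + 1))
  else gdigit β 1

/-- Lexicographic order `a ⪯ b` on sequences. -/
def lexLe (a b : ℕ → ℤ) : Prop :=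
  a = b ∨ ∃ m : ℕ, (∀ i, i < m → a i = b i) ∧ a m < b m

/-- The left shift. -/
def shiftSeq (u : ℕ → ℤ) : ℕ → ℤ := fun n => u (n + 1)

/-- The beta-shift: the closure (in the product topology) of the set of greedy digit
sequences of non-simple points of `[0,1]`. -/
def Xbeta (β : ℝ) : Set (ℕ → ℤ) :=
  closure {u | ∃ x : ℝ, x ∈ Set.Icc (0:ℝ) 1 ∧ ¬ isSimple β x ∧ u = gdigit β x}

/-- `Hfun q t n = exp (t * (q 0 + ⋯ + q (n-1)))`. -/
noncomputable def Hfun (q : ℕ → ℤ) (t : ℝ) (n : ℕ) : ℝ :=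
  Real.exp (t * ∑ i ∈ Finset.range n, (q i : ℝ))

/-- The power series `φ_t(z) = ∑_{n ≥ 1} q_n H_{n-1}(t) z^n` (real variable). -/
noncomputable def phiR (q : ℕ → ℤ) (t z : ℝ) : ℝ :=
  ∑' n : ℕ, (q n : ℝ) * Hfun q t n * z ^ (n + 1)

/-- The power series `φ_t(z)` (complex variable). -/
noncomputable def phiC (q : ℕ → ℤ) (t : ℝ) (z : ℂ) : ℂ :=
  ∑' n : ℕ, ((q n : ℝ) : ℂ) * ((Hfun q t n : ℝ) : ℂ) * z ^ (n + 1)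

/-- `r_t = limsup_n ( sup_{x ∈ X_β} e^{t Σ_{i<n} x_i} )^{1/n}`. -/
noncomputable def rT (β t : ℝ) : ℝ :=
  Filter.atTop.limsup fun n : ℕ =>
    (⨆ u : Xbeta β, Real.exp (t * ∑ i ∈ Finset.range n, ((u : ℕ → ℤ) i : ℝ))) ^ ((1:ℝ) / n)

/-- The lexicographic interval `[0̲, a]` in `X_β`. -/
def Ival (β : ℝ) (a : ℕ → ℤ) : Set (ℕ → ℤ) := {u ∈ Xbeta β | lexLe u a}

/-- Prepend a digit to a sequence. -/
def consSeq (a : ℤ) (u : ℕ → ℤ) : ℕ → ℤ := fun n => if n = 0 then a else u (n - 1)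

open Classical in
/-- The transfer operator with potential `t·χ_{C_1}`:
`(𝓛_t f)(x) = Σ_{σ y = x, y ∈ X_β} e^{t χ_{C_1}(y)} f(y)`. -/
noncomputable def Lop (β t : ℝ) (f : (ℕ → ℤ) → ℝ) (u : ℕ → ℤ) : ℝ :=
  (if consSeq 0 u ∈ Xbeta β then f (consSeq 0 u) else 0)
    + Real.exp t * (if consSeq 1 u ∈ Xbeta β then f (consSeq 1 u) else 0)

open Classical in
/-- The transfer operator (acting on complex-valued functions). -/
noncomputable def LopC (β t : ℝ) (f : (ℕ → ℤ) → ℂ) (u : ℕ → ℤ) : ℂ :=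
  (if consSeq 0 u ∈ Xbeta β then f (consSeq 0 u) else 0)
    + Real.exp t * (if consSeq 1 u ∈ Xbeta β then f (consSeq 1 u) else 0)

open Classical in
/-- The quasi-greedy expansion of `x ∈ (0,1]` (0-indexed): if `x` is simple with minimal `m`
such that `τ_β^[m] x = 1/β` (so `S(x) = m+1`), then `q_i(x) = g_i(x)` for `i < S(x)`,
`q_{S(x)}(x) = 0` and `q_{S(x)+i}(x) = q_i(1)`; otherwise it is the greedy expansion. -/
noncomputable def qdig (β x : ℝ) : ℕ → ℤ :=
  if h : ∃ m : ℕ, (tauβ β)^[m] x = 1 / β then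
    fun n =>
      if n < Nat.find h then gdigit β x n
      else if n = Nat.find h then 0
      else qone β (n - Nat.find h - 1)
  else gdigit β x

/-! If `τ_β^[m] x = 1/β`, the greedy digits of `x` end with a `1` at index `m` and vanish
afterwards, while the quasi-greedy digits agree with them before `m`, vanish at `m` and continue
with `q(1)`. Since `H` is multiplicative along concatenations, the quasi-greedy tail contributes
`H_m(g) λ^{-(m+1)} φ_t(λ⁻¹)`, which is the greedy term at `m` once `φ_t(λ⁻¹) = 1`. That equation
also gives the summability of the tail, as a non-summable `tsum` is `0`. -/

section Splice

noncomputable def phiCTerm (q : ℕ → ℤ) (t : ℝ) (z : ℂ) (n : ℕ) : ℂ :=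
  ((q n : ℝ) : ℂ) * ((Hfun q t n : ℝ) : ℂ) * z ^ (n + 1)

def spliceAt (d : ℕ → ℤ) (m : ℕ) (e : ℕ → ℤ) : ℕ → ℤ := fun n =>
  if n < m then d n else if n = m then 0 else e (n - m - 1)

lemma phiC_eq_tsum_phiCTerm (q : ℕ → ℤ) (t : ℝ) (z : ℂ) :
    phiC q t z = ∑' n, phiCTerm q t z n := rfl

variable {d e : ℕ → ℤ} {m : ℕ} {t : ℝ} {z : ℂ}

lemma Hfun_congr {q q' : ℕ → ℤ} {n : ℕ} (h : ∀ i < n, q i = q' i) :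
    Hfun q t n = Hfun q' t n := by
  unfold Hfun
  congr 2
  exact Finset.sum_congr rfl fun i hi => by rw [h i (Finset.mem_range.1 hi)]

lemma Hfun_add (q : ℕ → ℤ) (t : ℝ) (m k : ℕ) :
    Hfun q t (m + k) = Hfun q t m * Hfun (fun j => q (m + j)) t k := by
  simp only [Hfun, Finset.sum_range_add, mul_add, Real.exp_add]

lemma Hfun_succ (q : ℕ → ℤ) (t : ℝ) (n : ℕ) :
    Hfun q t (n + 1) = Hfun q t n * Real.exp (t * q n) := by
  simp only [Hfun, Finset.sum_range_succ, mul_add, Real.exp_add]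

lemma spliceAt_of_lt {n : ℕ} (hn : n < m) : spliceAt d m e n = d n := if_pos hn

lemma spliceAt_self : spliceAt d m e m = 0 := by simp [spliceAt]

lemma spliceAt_add (k : ℕ) : spliceAt d m e (m + 1 + k) = e k := by
  simp only [spliceAt]
  rw [if_neg (by omega), if_neg (by omega), show m + 1 + k - m - 1 = k by omega]

lemma Hfun_spliceAt_of_le {n : ℕ} (hn : n ≤ m) :
    Hfun (spliceAt d m e) t n = Hfun d t n :=
  Hfun_congr fun i hi => spliceAt_of_lt (by omega)

lemma Hfun_spliceAt_add (k : ℕ) :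
    Hfun (spliceAt d m e) t (m + 1 + k) = Hfun d t m * Hfun e t k := by
  rw [Hfun_add, Hfun_congr (q' := e) fun j _ => spliceAt_add j, Hfun_succ, spliceAt_self,
    Hfun_spliceAt_of_le le_rfl]
  simp

lemma phiCTerm_spliceAt_of_lt {n : ℕ} (hn : n < m) :
    phiCTerm (spliceAt d m e) t z n = phiCTerm d t z n := by
  rw [phiCTerm, phiCTerm, spliceAt_of_lt hn, Hfun_spliceAt_of_le hn.le]

lemma phiCTerm_spliceAt_self : phiCTerm (spliceAt d m e) t z m = 0 := by
  simp [phiCTerm, spliceAt_self]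

lemma phiCTerm_spliceAt_add (k : ℕ) :
    phiCTerm (spliceAt d m e) t z (k + (m + 1)) = Hfun d t m * z ^ (m + 1) * phiCTerm e t z k := by
  rw [phiCTerm, phiCTerm, add_comm, spliceAt_add, Hfun_spliceAt_add]
  push_cast
  ring

lemma summable_phiCTerm_of_phiC_eq_one (he : phiC e t z = 1) : Summable (phiCTerm e t z) := by
  by_contra hns
  rw [phiC_eq_tsum_phiCTerm, tsum_eq_zero_of_not_summable hns] at he
  exact zero_ne_one he

lemma phiC_spliceAt (he : phiC e t z = 1) :
    phiC (spliceAt d m e) t z =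
      ∑ n ∈ Finset.range m, phiCTerm d t z n + Hfun d t m * z ^ (m + 1) := by
  have htail : Summable fun k => phiCTerm (spliceAt d m e) t z (k + (m + 1)) := by
    simpa only [phiCTerm_spliceAt_add] using (summable_phiCTerm_of_phiC_eq_one he).mul_left _
  rw [phiC_eq_tsum_phiCTerm, ← ((summable_nat_add_iff _).1 htail).sum_add_tsum_nat_add (m + 1),
    Finset.sum_range_succ, phiCTerm_spliceAt_self, add_zero, tsum_congr phiCTerm_spliceAt_add,
    tsum_mul_left, ← phiC_eq_tsum_phiCTerm, he, mul_one,
    Finset.sum_congr rfl fun n hn => phiCTerm_spliceAt_of_lt (Finset.mem_range.1 hn)]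

lemma phiC_eq_sum_range_of_eq_zero (hd : ∀ n, m < n → d n = 0) :
    phiC d t z = ∑ n ∈ Finset.range (m + 1), phiCTerm d t z n := by
  refine tsum_eq_sum fun n hn => ?_
  simp [hd n (by simpa using hn)]

theorem phiC_spliceAt_eq (hdm : d m = 1) (hd : ∀ n, m < n → d n = 0) (he : phiC e t z = 1) :
    phiC (spliceAt d m e) t z = phiC d t z := by
  rw [phiC_spliceAt he, phiC_eq_sum_range_of_eq_zero hd, Finset.sum_range_succ]
  simp [phiCTerm, hdm]

end Splice

section BetaExpansion

variable {β x : ℝ} {m : ℕ}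

lemma tauβ_iterate_zero (β : ℝ) (k : ℕ) : (tauβ β)^[k] 0 = 0 :=
  Function.iterate_fixed (by simp [tauβ]) k

lemma tauβ_one_div (hβ : β ≠ 0) : tauβ β (1 / β) = 0 := by
  rw [tauβ, mul_one_div_cancel hβ, Int.floor_one, Int.cast_one, sub_self]

lemma gdigit_eq_one_of_iterate_eq_one_div (hβ : β ≠ 0) (h : (tauβ β)^[m] x = 1 / β) :
    gdigit β x m = 1 := by
  rw [gdigit, h, mul_one_div_cancel hβ, Int.floor_one]

lemma tauβ_iterate_eq_zero_of_iterate_eq_one_div (hβ : β ≠ 0) (h : (tauβ β)^[m] x = 1 / β)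
    {n : ℕ} (hn : m < n) : (tauβ β)^[n] x = 0 := by
  obtain ⟨k, rfl⟩ := Nat.exists_eq_add_of_lt hn
  rw [add_assoc, add_comm, Function.iterate_add_apply, Function.iterate_succ_apply, h,
    tauβ_one_div hβ, tauβ_iterate_zero]

lemma gdigit_eq_zero_of_iterate_eq_one_div (hβ : β ≠ 0) (h : (tauβ β)^[m] x = 1 / β)
    {n : ℕ} (hn : m < n) : gdigit β x n = 0 := by
  rw [gdigit, tauβ_iterate_eq_zero_of_iterate_eq_one_div hβ h hn, mul_zero, Int.floor_zero]

lemma qdig_of_isSimple (h : isSimple β x) :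
    qdig β x = spliceAt (gdigit β x) (Nat.find h) (qone β) :=
  dif_pos h

lemma qdig_of_not_isSimple (h : ¬ isSimple β x) : qdig β x = gdigit β x :=
  dif_neg h

end BetaExpansion

theorem greedy_quasiGreedy_series_eq_general (β t : ℝ) (hβ1 : 1 < β)
    (x : ℝ)
    (lam : ℂ) (hroot : phiC (qone β) t lam⁻¹ = 1) :
    ∑' n : ℕ, ((gdigit β x n : ℝ) : ℂ) * ((Hfun (gdigit β x) t n : ℝ) : ℂ) / lam ^ (n + 1)
      = ∑' n : ℕ, ((qdig β x n : ℝ) : ℂ) * ((Hfun (qdig β x) t n : ℝ) : ℂ) / lam ^ (n + 1) := by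
  simp only [div_eq_mul_inv, ← inv_pow]
  change phiC _ t lam⁻¹ = phiC _ t lam⁻¹
  by_cases h : isSimple β x
  · have hβ : β ≠ 0 := (zero_lt_one.trans hβ1).ne'
    have hm := Nat.find_spec h
    rw [qdig_of_isSimple h, phiC_spliceAt_eq (gdigit_eq_one_of_iterate_eq_one_div hβ hm)
      (fun _ => gdigit_eq_zero_of_iterate_eq_one_div hβ hm) hroot]
  · rw [qdig_of_not_isSimple h]

/-- **Greedy vs quasi-greedy series identity.**  For `x ∈ (0,1]` and any `λ` with
`|λ| > r_t` and `φ_t(λ⁻¹) = 1`,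
`∑_{n≥1} g_n(x) e^{t Σ_{i<n} g_i(x)} λ^{-n} = ∑_{n≥1} q_n(x) e^{t Σ_{i<n} q_i(x)} λ^{-n}`. -/
theorem greedy_quasiGreedy_series_eq (β t : ℝ) (hβ1 : 1 < β) (hβ2 : β ≤ 2)
    (x : ℝ) (hx : x ∈ Set.Ioc (0 : ℝ) 1)
    (lam : ℂ) (hr : rT β t < ‖lam‖) (hroot : phiC (qone β) t lam⁻¹ = 1) :
    ∑' n : ℕ, ((gdigit β x n : ℝ) : ℂ) * ((Hfun (gdigit β x) t n : ℝ) : ℂ) / lam ^ (n + 1)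
      = ∑' n : ℕ, ((qdig β x n : ℝ) : ℂ) * ((Hfun (qdig β x) t n : ℝ) : ℂ) / lam ^ (n + 1) :=
  greedy_quasiGreedy_series_eq_general β t hβ1 x lam hroot
end

section
/- Let $1<\beta\le2$ and write the quasi-greedy expansion of $1$ as $\underline{1}=1^N 0^M 1\cdots$ with maximal initial run of $N\ge2$ ones followed by $M\ge1$ zeros. Then $c_\beta:=\sup_{\mu\in M(X_\beta)}\mu(C_1)$ satisfies $\frac{N-1}{N}\le c_\beta\le\frac{N}{N+1}$, where $M(X_\beta)$ is the set of shift-invariant Borel probability measures on $X_\beta$. -/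
/-!
The hypotheses on the quasi-greedy expansion say that the greedy expansion of `1` starts with
`N` ones and that `0 < τ_β^N 1 ≤ 1 / β`: before the orbit of `1` first hits `1 / β` the two
expansions agree, and at that time the quasi-greedy one has a `0`, so the hit cannot come before
time `N`.

Upper bound: comparing with the orbit of `1`, no point of `X_β` begins with `N + 1` ones. For an
invariant measure the `N + 1` sets `{x_i ≠ 1}`, `i ≤ N`, therefore cover `X_β`, and each has
measure `1 - μ(C_1)`; hence `(N + 1)(1 - μ(C_1)) ≥ 1`.

Lower bound: `0 < τ_β^N 1` is equivalent to `β^(N+1) - 2β^N + 1 > 0`, which is exactly what makes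
every shift of `(1^(N-1) 0)^∞` the greedy expansion of a non-simple point of `(0, 1)`. The
uniform measure on this periodic orbit is invariant and gives `C_1` mass `(N - 1) / N`.
-/

open scoped BigOperators
open Filter

open MeasureTheory in
/-- `c_β = sup_{μ ∈ M(X_β)} μ(C_1)`, the supremum of the measure of the cylinder
`C_1 = {x_1 = 1}` over all shift-invariant Borel probability measures on `X_β`. -/
noncomputable def cbeta (β : ℝ) : ℝ :=
  sSup {r : ℝ | ∃ μ : Measure (ℕ → ℤ), IsProbabilityMeasure μ ∧
    μ (Xbeta β) = 1 ∧ μ.map shiftSeq = μ ∧ r = (μ {u | u 0 = 1}).toReal}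

open MeasureTheory Finset
open scoped ENNReal

section BetaMap

variable {β : ℝ}

lemma tauβ_of_floor_eq {y : ℝ} {k : ℤ} (h : ⌊β * y⌋ = k) : tauβ β y = β * y - k := by
  rw [tauβ, h]

lemma one_div_le_iterate_of_gdigit_eq_one (hβ : 0 < β) {x : ℝ} {n : ℕ}
    (h : gdigit β x n = 1) : 1 / β ≤ (tauβ β)^[n] x := by
  have := Int.floor_le (β * (tauβ β)^[n] x)
  rw [show ⌊β * (tauβ β)^[n] x⌋ = 1 from h] at this
  rw [div_le_iff₀ hβ]
  push_cast at this
  linarith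

lemma iterate_lt_one_div_of_gdigit_eq_zero (hβ : 0 < β) {x : ℝ} {n : ℕ}
    (h : gdigit β x n = 0) : (tauβ β)^[n] x < 1 / β := by
  have := Int.lt_floor_add_one (β * (tauβ β)^[n] x)
  rw [show ⌊β * (tauβ β)^[n] x⌋ = 0 from h] at this
  rw [lt_div_iff₀ hβ]
  push_cast at this
  linarith

lemma iterate_tauβ_of_gdigit_eq_one {x : ℝ} {n : ℕ} (h : ∀ i < n, gdigit β x i = 1) :
    (tauβ β)^[n] x = β ^ n * x - ∑ i ∈ range n, β ^ i := by
  induction n with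
  | zero => simp
  | succ n ih =>
    rw [Function.iterate_succ_apply', tauβ_of_floor_eq (h n n.lt_succ_self),
      ih fun i hi => h i (hi.trans n.lt_succ_self), sum_range_succ', pow_succ']
    simp only [pow_succ', ← mul_sum]
    push_cast
    ring

/-- A point of `[0, 1]` whose greedy expansion began with `N + 1` ones would have its `N`-th
iterate squeezed between `1 / β` and `τ_β^N 1 ≤ 1 / β`, so it would be simple. -/
lemma exists_gdigit_ne_one_of_not_isSimple (hβ : 0 < β) {N : ℕ}
    (hdig : ∀ i < N, gdigit β 1 i = 1) (hle : (tauβ β)^[N] 1 ≤ 1 / β)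
    {x : ℝ} (hx : x ≤ 1) (hns : ¬ isSimple β x) : ∃ i ≤ N, gdigit β x i ≠ 1 := by
  by_contra! hall
  have hlower := one_div_le_iterate_of_gdigit_eq_one hβ (hall N le_rfl)
  have hmono : (tauβ β)^[N] x ≤ (tauβ β)^[N] 1 := by
    rw [iterate_tauβ_of_gdigit_eq_one fun i hi => hall i hi.le,
      iterate_tauβ_of_gdigit_eq_one hdig]
    gcongr
  exact hns ⟨N, le_antisymm (hmono.trans hle) hlower⟩

lemma exists_ne_one_of_mem_Xbeta {N : ℕ} (hβ : 0 < β) (hdig : ∀ i < N, gdigit β 1 i = 1)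
    (hle : (tauβ β)^[N] 1 ≤ 1 / β) {u : ℕ → ℤ} (hu : u ∈ Xbeta β) : ∃ i ≤ N, u i ≠ 1 := by
  have hclosed : IsClosed {u : ℕ → ℤ | ∃ i ≤ N, u i ≠ 1} := by
    have hset : {u : ℕ → ℤ | ∃ i ≤ N, u i ≠ 1} = ⋃ i ∈ Iic N, {u | u i ≠ 1} := by
      ext u
      simp
    rw [hset]
    exact isClosed_biUnion_finset fun i _ =>
      IsClosed.preimage (f := fun u : ℕ → ℤ => u i) (continuous_apply i) (isClosed_discrete {1}ᶜ)
  refine closure_minimal ?_ hclosed hu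
  rintro _ ⟨x, hx, hns, rfl⟩
  exact exists_gdigit_ne_one_of_not_isSimple hβ hdig hle hx.2 hns

end BetaMap

section QuasiGreedy

variable {β : ℝ} {N : ℕ}

lemma qone_eq_gdigit_of_forall_ne {n : ℕ} (h : ∀ m ≤ n, (tauβ β)^[m] 1 ≠ 1 / β) :
    qone β n = gdigit β 1 n := by
  unfold qone
  split_ifs with hs
  · have hn : n < Nat.find hs := Nat.lt_find_iff hs n |>.2 h
    dsimp only
    rw [Nat.mod_eq_of_lt (by omega : n < Nat.find hs + 1), if_neg hn.ne]
  · rfl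

lemma qone_eq_zero_of_iterate_eq (hβ : 0 < β) {m : ℕ} (hm : (tauβ β)^[m] 1 = 1 / β)
    (hmin : ∀ k < m, (tauβ β)^[k] 1 ≠ 1 / β) : qone β m = 0 := by
  have hs : ∃ k, (tauβ β)^[k] (1 : ℝ) = 1 / β := ⟨m, hm⟩
  have hfind : Nat.find hs = m := (Nat.find_eq_iff hs).2 ⟨hm, hmin⟩
  rw [qone, dif_pos hs, hfind, Nat.mod_eq_of_lt m.lt_succ_self, if_pos rfl, gdigit, hm,
    mul_one_div_cancel hβ.ne', Int.floor_one, sub_self]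

lemma iterate_tauβ_one_ne (hβ : 0 < β) (hones : ∀ i < N, qone β i = 1) :
    ∀ k < N, (tauβ β)^[k] 1 ≠ 1 / β := by
  intro k hk hkeq
  have hs : ∃ k, (tauβ β)^[k] (1 : ℝ) = 1 / β := ⟨k, hkeq⟩
  have := hones _ ((Nat.find_min' hs hkeq).trans_lt hk)
  rw [qone_eq_zero_of_iterate_eq hβ (Nat.find_spec hs) fun j hj => Nat.find_min hs hj] at this
  exact zero_ne_one this

lemma gdigit_one_eq_one (hβ : 0 < β) (hones : ∀ i < N, qone β i = 1) :
    ∀ i < N, gdigit β 1 i = 1 := fun i hi =>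
  qone_eq_gdigit_of_forall_ne (fun m hm => iterate_tauβ_one_ne hβ hones m (hm.trans_lt hi)) ▸
    hones i hi

lemma iterate_tauβ_one_le (hβ : 0 < β) (hones : ∀ i < N, qone β i = 1)
    (hzero : qone β N = 0) : (tauβ β)^[N] 1 ≤ 1 / β := by
  by_cases hN : (tauβ β)^[N] 1 = 1 / β
  · exact hN.le
  · have h : ∀ m ≤ N, (tauβ β)^[m] 1 ≠ 1 / β := fun m hm =>
      hm.lt_or_eq.elim (iterate_tauβ_one_ne hβ hones m) (· ▸ hN)
    exact (iterate_lt_one_div_of_gdigit_eq_zero hβ (qone_eq_gdigit_of_forall_ne h ▸ hzero)).le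

lemma iterate_tauβ_one_pos (hβ : 0 < β) (hN : N ≠ 0) (hones : ∀ i < N, qone β i = 1) :
    0 < (tauβ β)^[N] 1 := by
  obtain ⟨k, rfl⟩ := Nat.exists_eq_succ_of_ne_zero hN
  have hk : gdigit β 1 k = 1 := gdigit_one_eq_one hβ hones k k.lt_succ_self
  have hlt : 1 / β < (tauβ β)^[k] 1 := lt_of_le_of_ne
    (one_div_le_iterate_of_gdigit_eq_one hβ hk) (iterate_tauβ_one_ne hβ hones k k.lt_succ_self).symm
  rw [Function.iterate_succ_apply', tauβ_of_floor_eq hk]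
  rw [div_lt_iff₀ hβ] at hlt
  push_cast
  linarith

lemma sub_one_mul_iterate_tauβ_one (hdig : ∀ i < N, gdigit β 1 i = 1) :
    (β - 1) * (tauβ β)^[N] 1 = β ^ (N + 1) - 2 * β ^ N + 1 := by
  rw [iterate_tauβ_of_gdigit_eq_one hdig]
  linear_combination (-1 : ℝ) * geom_sum_mul β N

end QuasiGreedy

section Shift

lemma measurable_shiftSeq : Measurable shiftSeq :=
  measurable_pi_lambda _ fun n => measurable_pi_apply (n + 1)

lemma iterate_shiftSeq_apply (u : ℕ → ℤ) (i n : ℕ) : shiftSeq^[i] u n = u (n + i) := by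
  induction i generalizing n with
  | zero => rfl
  | succ i ih =>
    rw [Function.iterate_succ_apply', shiftSeq, ih]
    congr 1
    omega

/-- Pigeonhole through the union bound: the `N + 1` complements of the cylinders `{u i = a}`
cover almost everything and all have the measure of `{u 0 = a}ᶜ`. -/
lemma measureReal_setOf_apply_zero_le {μ : Measure (ℕ → ℤ)} [IsProbabilityMeasure μ]
    (hμ : MeasurePreserving shiftSeq μ μ) {a : ℤ} {N : ℕ}
    (h : ∀ᵐ u ∂μ, ∃ i ≤ N, u i ≠ a) : μ.real {u | u 0 = a} ≤ N / (N + 1) := by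
  have hmeas : MeasurableSet {u : ℕ → ℤ | u 0 = a} :=
    measurableSet_eq_fun (measurable_pi_apply 0) measurable_const
  have hcompl : ∀ i, μ.real {u | u i ≠ a} = 1 - μ.real {u | u 0 = a} := by
    intro i
    have hpre : {u : ℕ → ℤ | u i ≠ a} = shiftSeq^[i] ⁻¹' {u | u 0 = a}ᶜ := by
      ext u
      simp [iterate_shiftSeq_apply]
    rw [hpre, (hμ.iterate i).measureReal_preimage hmeas.compl.nullMeasurableSet,
      measureReal_compl hmeas, probReal_univ]
  have hcover : μ.real (⋃ i ∈ Iic N, {u | u i ≠ a}) = 1 := by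
    have hset : (⋃ i ∈ Iic N, {u : ℕ → ℤ | u i ≠ a}) = {u | ∃ i ≤ N, u i ≠ a} := by
      ext u
      simp
    have hmeasU : MeasurableSet (⋃ i ∈ Iic N, {u : ℕ → ℤ | u i ≠ a}) :=
      Finset.measurableSet_biUnion _ fun i _ =>
        (measurableSet_eq_fun (measurable_pi_apply i) measurable_const).compl
    rw [measureReal_def, (mem_ae_iff_prob_eq_one hmeasU).1 (by rwa [hset]), ENNReal.toReal_one]
  have hunion := measureReal_biUnion_finset_le (μ := μ) (Iic N) fun i => {u | u i ≠ a}
  rw [hcover] at hunion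
  simp only [hcompl, sum_const, Nat.card_Iic, nsmul_eq_mul] at hunion
  rw [le_div_iff₀ (by positivity)]
  push_cast at hunion
  linarith

end Shift

section OrbitMeasure

variable {α : Type*} [MeasurableSpace α]

noncomputable def orbitMeasure (f : α → α) (x : α) (N : ℕ) : Measure α :=
  (N : ℝ≥0∞)⁻¹ • ∑ j ∈ range N, Measure.dirac (f^[j] x)

variable {f : α → α} {x : α} {N : ℕ}

lemma orbitMeasure_apply {s : Set α} [DecidablePred (· ∈ s)] (hs : MeasurableSet s) :
    orbitMeasure f x N s = (N : ℝ≥0∞)⁻¹ * #{j ∈ range N | f^[j] x ∈ s} := by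
  rw [orbitMeasure, Measure.smul_apply, Measure.finsetSum_apply, smul_eq_mul]
  simp only [Measure.dirac_apply' _ hs, Set.indicator_apply, Pi.one_apply, sum_boole]

lemma orbitMeasure_eq_one (hN : N ≠ 0) {s : Set α} (hs : MeasurableSet s)
    (h : ∀ j < N, f^[j] x ∈ s) : orbitMeasure f x N s = 1 := by
  classical
  rw [orbitMeasure_apply hs, filter_true_of_mem fun j hj => h j (mem_range.1 hj), card_range]
  exact ENNReal.inv_mul_cancel (by exact_mod_cast hN) (ENNReal.natCast_ne_top N)

lemma isProbabilityMeasure_orbitMeasure (hN : N ≠ 0) :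
    IsProbabilityMeasure (orbitMeasure f x N) :=
  ⟨orbitMeasure_eq_one hN MeasurableSet.univ fun _ _ => Set.mem_univ _⟩

lemma map_orbitMeasure (hf : Measurable f) (hx : f^[N] x = x) :
    (orbitMeasure f x N).map f = orbitMeasure f x N := by
  rw [orbitMeasure, Measure.map_smul, Measure.map_finset_sum hf.aemeasurable]
  simp only [Measure.map_dirac' hf, ← Function.iterate_succ_apply' f]
  congr 1
  cases N with
  | zero => simp
  | succ n => rw [sum_range_succ, sum_range_succ', Function.iterate_zero_apply, hx, add_comm]

end OrbitMeasure

section Lower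

variable {β : ℝ}

/-- `x n` is the `n`-th iterate of `x 0`, whose greedy digits are therefore `d`; and `x 0` is not
simple because `β x_n = 1` would force `x (n + 1)` to be an integer. -/
lemma mem_Xbeta_of_orbit {x : ℕ → ℝ} {d : ℕ → ℤ} (hx : ∀ n, x n ∈ Set.Ioo 0 1)
    (hstep : ∀ n, β * x n = d n + x (n + 1)) : d ∈ Xbeta β := by
  have hfloor : ∀ n, ⌊β * x n⌋ = d n := fun n => by
    rw [hstep, Int.floor_intCast_add, Int.floor_eq_zero_iff.2 ⟨(hx _).1.le, (hx _).2⟩, add_zero]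
  have horbit : ∀ n, (tauβ β)^[n] (x 0) = x n := by
    intro n
    induction n with
    | zero => rfl
    | succ n ih => rw [Function.iterate_succ_apply', ih, tauβ_of_floor_eq (hfloor n), hstep]; ring
  refine subset_closure ⟨x 0, ⟨(hx 0).1.le, (hx 0).2.le⟩, ?_, funext fun n => ?_⟩
  · rintro ⟨n, hn⟩
    rw [horbit] at hn
    have hβ : 0 < β := one_div_pos.1 (hn ▸ (hx n).1)
    have hsum := hstep n
    rw [hn, mul_one_div_cancel hβ.ne'] at hsum
    have hlt : (d n : ℝ) < 1 := by linarith [(hx (n + 1)).1]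
    have hgt : (0 : ℝ) < d n := by linarith [(hx (n + 1)).2]
    norm_cast at hlt hgt
    omega
  · rw [gdigit, horbit, hfloor]

def periodicWord (N n : ℕ) : ℤ := if n % N = N - 1 then 0 else 1

/-- `∑_k periodicWord N (n + k) β^{-(k+1)}`, the value of the `n`-th shift of the word. -/
noncomputable def periodicValue (β : ℝ) (N n : ℕ) : ℝ := 1 / (β - 1) - β ^ (n % N) / (β ^ N - 1)

variable {N : ℕ}

lemma mul_periodicValue (hβ : 1 < β) (hN : N ≠ 0) (n : ℕ) :
    β * periodicValue β N n = periodicWord N n + periodicValue β N (n + 1) := by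
  have hβ1 : β - 1 ≠ 0 := by linarith
  have hβN : β ^ N - 1 ≠ 0 := (sub_pos.2 (one_lt_pow₀ hβ hN)).ne'
  have hk : n % N < N := Nat.mod_lt n (Nat.pos_of_ne_zero hN)
  rw [periodicWord, periodicValue, periodicValue, ← Nat.mod_add_mod n N 1]
  split_ifs with hlast
  · have hpow : β ^ (n % N) * β = β ^ N := by rw [← pow_succ, hlast, Nat.sub_add_cancel (by omega)]
    rw [hlast, Nat.sub_add_cancel (by omega), Nat.mod_self, pow_zero]
    rw [hlast] at hpow
    field_simp
    linear_combination (1 - β) * hpow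
  · rw [Nat.mod_eq_of_lt (by omega : n % N + 1 < N)]
    field_simp
    ring

lemma periodicValue_mem_Ioo (hβ : 1 < β) (hN : 2 ≤ N) (hP : 0 < β ^ (N + 1) - 2 * β ^ N + 1)
    (n : ℕ) : periodicValue β N n ∈ Set.Ioo 0 1 := by
  have hβ1 : 0 < β - 1 := by linarith
  have hβN : 0 < β ^ N - 1 := sub_pos.2 (one_lt_pow₀ hβ (by omega))
  have hk : n % N ≤ N - 1 := Nat.le_sub_one_of_lt (Nat.mod_lt n (by omega))
  have hlo : 1 ≤ β ^ (n % N) := one_le_pow₀ hβ.le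
  have hhi : β ^ (n % N) ≤ β ^ (N - 1) := pow_le_pow_right₀ hβ.le hk
  have hpow : β ^ (N - 1) * β = β ^ N := by rw [← pow_succ, Nat.sub_add_cancel (by omega)]
  have hgt : 1 < β ^ (N - 1) := one_lt_pow₀ hβ (by omega)
  rw [periodicValue, div_sub_div _ _ hβ1.ne' hβN.ne']
  constructor
  · apply div_pos _ (by positivity)
    nlinarith
  · rw [div_lt_one (by positivity)]
    nlinarith [pow_succ β N, mul_nonneg hβ1.le (sub_nonneg.2 hlo)]

lemma iterate_shiftSeq_periodicWord_self : shiftSeq^[N] (periodicWord N) = periodicWord N := by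
  funext n
  rw [iterate_shiftSeq_apply, periodicWord, periodicWord, Nat.add_mod_right]

lemma filter_iterate_shiftSeq_periodicWord :
    {j ∈ range N | shiftSeq^[j] (periodicWord N) ∈ {u | u 0 = 1}} = range (N - 1) := by
  ext j
  simp only [mem_filter, mem_range, Set.mem_ofPred_eq, iterate_shiftSeq_apply, zero_add,
    periodicWord]
  by_cases hj : j < N
  · rw [Nat.mod_eq_of_lt hj]
    split_ifs <;> omega
  · simp only [hj, false_and, false_iff]
    omega

lemma iterate_shiftSeq_periodicWord_mem_Xbeta (hβ : 1 < β) (hN : 2 ≤ N)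
    (hP : 0 < β ^ (N + 1) - 2 * β ^ N + 1) (j : ℕ) :
    shiftSeq^[j] (periodicWord N) ∈ Xbeta β := by
  rw [show shiftSeq^[j] (periodicWord N) = fun n => periodicWord N (n + j) from
    funext (iterate_shiftSeq_apply _ j)]
  refine mem_Xbeta_of_orbit (x := fun n => periodicValue β N (n + j))
    (fun n => periodicValue_mem_Ioo hβ hN hP _) fun n => ?_
  simpa only [add_right_comm] using mul_periodicValue hβ (by omega) (n + j)

end Lower

section Cbeta

variable {β : ℝ} {N : ℕ}

lemma le_cbeta (μ : Measure (ℕ → ℤ)) [IsProbabilityMeasure μ] (hX : μ (Xbeta β) = 1)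
    (hinv : μ.map shiftSeq = μ) : μ.real {u | u 0 = 1} ≤ cbeta β :=
  le_csSup ⟨1, by rintro r ⟨ν, hν, -, -, rfl⟩; exact measureReal_le_one⟩ ⟨μ, ‹_›, hX, hinv, rfl⟩

lemma cbeta_le {c : ℝ} (hc : 0 ≤ c)
    (h : ∀ μ : Measure (ℕ → ℤ), IsProbabilityMeasure μ → μ (Xbeta β) = 1 →
      μ.map shiftSeq = μ → μ.real {u | u 0 = 1} ≤ c) : cbeta β ≤ c :=
  Real.sSup_le (by rintro r ⟨μ, hμ, hX, hinv, rfl⟩; exact h μ hμ hX hinv) hc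

lemma cbeta_le_div_add_one (hβ : 0 < β) (hdig : ∀ i < N, gdigit β 1 i = 1)
    (hle : (tauβ β)^[N] 1 ≤ 1 / β) : cbeta β ≤ N / (N + 1) :=
  cbeta_le (by positivity) fun μ _ hX hinv =>
    measureReal_setOf_apply_zero_le ⟨measurable_shiftSeq, hinv⟩ <| by
      filter_upwards [(mem_ae_iff_prob_eq_one isClosed_closure.measurableSet).2 hX] with u hu
      exact exists_ne_one_of_mem_Xbeta hβ hdig hle hu

lemma sub_one_div_le_cbeta (hβ : 1 < β) (hN : 2 ≤ N)
    (hP : 0 < β ^ (N + 1) - 2 * β ^ N + 1) : ((N : ℝ) - 1) / N ≤ cbeta β := by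
  have hN0 : N ≠ 0 := by omega
  have := isProbabilityMeasure_orbitMeasure (f := shiftSeq) (x := periodicWord N) hN0
  have hmeas : MeasurableSet {u : ℕ → ℤ | u 0 = 1} :=
    measurableSet_eq_fun (measurable_pi_apply 0) measurable_const
  convert le_cbeta (orbitMeasure shiftSeq (periodicWord N) N)
    (orbitMeasure_eq_one hN0 isClosed_closure.measurableSet fun j _ =>
      iterate_shiftSeq_periodicWord_mem_Xbeta hβ hN hP j)
    (map_orbitMeasure measurable_shiftSeq iterate_shiftSeq_periodicWord_self) using 1
  rw [measureReal_def, orbitMeasure_apply hmeas, filter_iterate_shiftSeq_periodicWord, card_range,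
    ENNReal.toReal_mul, ENNReal.toReal_inv, ENNReal.toReal_natCast, ENNReal.toReal_natCast,
    Nat.cast_sub (by omega), Nat.cast_one, div_eq_inv_mul]

end Cbeta

theorem cbeta_bounds_of_initial_block_general (β : ℝ) (hβ1 : 1 < β)
    (N M : ℕ) (hN : 2 ≤ N) (hM : 1 ≤ M)
    (hones : ∀ i, i < N → qone β i = 1)
    (hzeros : ∀ i, N ≤ i → i < N + M → qone β i = 0) :
    ((N : ℝ) - 1) / N ≤ cbeta β ∧ cbeta β ≤ (N : ℝ) / (N + 1) := by
  have hβ : 0 < β := by linarith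
  have hdig := gdigit_one_eq_one hβ hones
  have hpos := iterate_tauβ_one_pos hβ (by omega) hones
  have hP : 0 < β ^ (N + 1) - 2 * β ^ N + 1 := by
    rw [← sub_one_mul_iterate_tauβ_one hdig]
    exact mul_pos (by linarith) hpos
  exact ⟨sub_one_div_le_cbeta hβ1 hN hP,
    cbeta_le_div_add_one hβ hdig (iterate_tauβ_one_le hβ hones (hzeros N le_rfl (by omega)))⟩

/-- **Bounds on the maximal frequency, case `N ≥ 2`.**  If the quasi-greedy expansion of `1`
begins `1^N 0^M 1⋯` (maximal initial block of `N ≥ 2` ones followed by `M ≥ 1` zeros and a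
one), then `(N-1)/N ≤ c_β ≤ N/(N+1)`. -/
theorem cbeta_bounds_of_initial_block (β : ℝ) (hβ1 : 1 < β) (hβ2 : β ≤ 2)
    (N M : ℕ) (hN : 2 ≤ N) (hM : 1 ≤ M)
    (hones : ∀ i, i < N → qone β i = 1)
    (hzeros : ∀ i, N ≤ i → i < N + M → qone β i = 0)
    (hnext : qone β (N + M) = 1) :
    ((N : ℝ) - 1) / N ≤ cbeta β ∧ cbeta β ≤ (N : ℝ) / (N + 1) :=
  cbeta_bounds_of_initial_block_general β hβ1 N M hN hM hones hzeros
end
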